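/- arXiv:2312.05789 — 5 statements merged into one kernel-verified Lean document; each statement's English description precedes it below -/
import Mathlib

section
/- Let c > 0 be a fixed real number, and define a sequence (a_n) of positive reals by a_1 = 1 and a_{n+1} = a_n + c·a_n^{3/4} for every n ≥ 1. Then a_n is asymptotically equivalent to (c n / 4)^4 as n → ∞; that is, lim_{n→∞} a_n / (c n / 4)^4 = 1. -/
/-!
Put `b n = a n ^ (1 - p)` (here `p = 3/4`). The recurrence becomes
`b (n + 1) = b n * (1 + c / b n) ^ (1 - p)`, and since `b n → ∞`, the increment
`b (n + 1) - b n` is a difference quotient of `y ↦ (1 + c y) ^ (1 - p)` at `0` with step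
`1 / b n`, hence tends to `(1 - p) c`. By Cesàro, `b n / n → (1 - p) c`; raising to the
power `1 / (1 - p) = 4` gives the claim.
-/

open Filter Topology

theorem tendsto_div_natCast_of_tendsto_sub {u : ℕ → ℝ} {L : ℝ}
    (h : Tendsto (fun n => u (n + 1) - u n) atTop (𝓝 L)) :
    Tendsto (fun n : ℕ => u n / n) atTop (𝓝 L) := by
  have hmean : Tendsto (fun n : ℕ => (u n - u 0) / n + u 0 / n) atTop (𝓝 (L + 0)) := by
    refine .add ?_ (tendsto_const_nhds.div_atTop tendsto_natCast_atTop_atTop)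
    refine h.cesaro.congr fun n => ?_
    rw [Finset.sum_range_sub, inv_mul_eq_div]
  rw [add_zero] at hmean
  exact hmean.congr fun n => by ring

theorem tendsto_mul_one_add_div_rpow_sub_one {α : Type*} {l : Filter α} {t : α → ℝ}
    (c q : ℝ) (ht : Tendsto t l atTop) :
    Tendsto (fun x => t x * ((1 + c / t x) ^ q - 1)) l (𝓝 (q * c)) := by
  have hderiv : HasDerivAt (fun y : ℝ => (1 + c * y) ^ q) (q * c) 0 := by
    have := ((hasDerivAt_id (0 : ℝ)).const_mul c |>.const_add 1).rpow_const (p := q)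
      (Or.inl (by simp))
    simpa [mul_comm c q] using this
  refine (hderiv.tendsto_slope_zero_right.comp (tendsto_inv_atTop_nhdsGT_zero.comp ht)).congr
    fun x => ?_
  simp [div_eq_mul_inv]

section Recurrence

variable {a : ℕ → ℝ} {c p : ℝ}

theorem pos_of_add_mul_rpow (hrec : ∀ n, a (n + 1) = a n + c * a n ^ p) (hc : 0 ≤ c)
    (h0 : 0 < a 0) (n : ℕ) : 0 < a n := by
  induction n with
  | zero => exact h0
  | succ n ih =>
    rw [hrec]
    positivity

theorem add_natCast_mul_le_of_add_mul_rpow (hrec : ∀ n, a (n + 1) = a n + c * a n ^ p)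
    (hc : 0 ≤ c) (hp : 0 ≤ p) (h0 : 0 < a 0) (n : ℕ) : a 0 + n * (c * a 0 ^ p) ≤ a n := by
  induction n with
  | zero => simp
  | succ n ih =>
    have hinc : 0 ≤ (n : ℝ) * (c * a 0 ^ p) := by positivity
    have hstep : a 0 ^ p ≤ a n ^ p := Real.rpow_le_rpow h0.le (by linarith) hp
    rw [hrec]
    push_cast
    nlinarith

theorem tendsto_atTop_of_add_mul_rpow (hrec : ∀ n, a (n + 1) = a n + c * a n ^ p)
    (hc : 0 < c) (hp : 0 ≤ p) (h0 : 0 < a 0) : Tendsto a atTop atTop := by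
  refine tendsto_atTop_mono (add_natCast_mul_le_of_add_mul_rpow hrec hc.le hp h0) ?_
  refine tendsto_atTop_add_const_left _ _ ?_
  exact tendsto_natCast_atTop_atTop.atTop_mul_const (by positivity)

theorem add_mul_rpow_rpow_one_sub {x : ℝ} (hx : 0 < x) (hc : 0 ≤ c) :
    (x + c * x ^ p) ^ (1 - p) = x ^ (1 - p) * (1 + c / x ^ (1 - p)) ^ (1 - p) := by
  have hsplit : x + c * x ^ p = x * (1 + c / x ^ (1 - p)) := by
    rw [Real.rpow_sub hx, Real.rpow_one]
    field_simp
  rw [hsplit, Real.mul_rpow hx.le (by positivity)]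

theorem tendsto_rpow_one_sub_sub_of_add_mul_rpow (hrec : ∀ n, a (n + 1) = a n + c * a n ^ p)
    (hc : 0 < c) (hp0 : 0 ≤ p) (hp1 : p < 1) (h0 : 0 < a 0) :
    Tendsto (fun n => a (n + 1) ^ (1 - p) - a n ^ (1 - p)) atTop (𝓝 ((1 - p) * c)) := by
  have hroot : Tendsto (fun n => a n ^ (1 - p)) atTop atTop :=
    (tendsto_rpow_atTop (by linarith)).comp (tendsto_atTop_of_add_mul_rpow hrec hc hp0 h0)
  refine (tendsto_mul_one_add_div_rpow_sub_one c (1 - p) hroot).congr fun n => ?_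
  rw [hrec, add_mul_rpow_rpow_one_sub (pos_of_add_mul_rpow hrec hc.le h0 n) hc.le]
  ring

end Recurrence

/-- The discrete analogue of the ODE g' = c g^{3/4}: the sequence defined by
a 1 = 1 and a (n+1) = a n + c * (a n)^(3/4) satisfies a n ~ (c n / 4)^4. -/
theorem stmt_0 (c : ℝ) (hc : 0 < c) (a : ℕ → ℝ) (ha1 : a 1 = 1)
    (harec : ∀ n : ℕ, 1 ≤ n → a (n + 1) = a n + c * (a n) ^ ((3 : ℝ) / 4)) :
    Tendsto (fun n : ℕ => a n / (c * n / 4) ^ 4) atTop (nhds 1) := by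
  have hrec : ∀ n, a (n + 1 + 1) = a (n + 1) + c * a (n + 1) ^ ((3 : ℝ) / 4) :=
    fun n => harec (n + 1) (by omega)
  have hpos : ∀ n, 0 < a (n + 1) := pos_of_add_mul_rpow hrec hc.le (by simp [ha1])
  have hdiff : Tendsto (fun n => a (n + 1) ^ (4⁻¹ : ℝ) - a n ^ (4⁻¹ : ℝ)) atTop (𝓝 (c / 4)) := by
    rw [← tendsto_add_atTop_iff_nat 1]
    convert tendsto_rpow_one_sub_sub_of_add_mul_rpow (a := fun n => a (n + 1)) (p := 3 / 4)
      hrec hc (by norm_num) (by norm_num) (hpos 0) using 2 <;> norm_num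
    ring
  have hroot := ((tendsto_div_natCast_of_tendsto_sub
    (u := fun n => a n ^ (4⁻¹ : ℝ)) hdiff).const_mul (4 / c)).pow 4
  rw [show (4 / c * (c / 4)) ^ 4 = (1 : ℝ) by field_simp] at hroot
  refine hroot.congr' ?_
  filter_upwards [eventually_ge_atTop 1] with n hn
  obtain ⟨m, rfl⟩ := Nat.exists_eq_add_of_le' hn
  have hquartic : (a (m + 1) ^ (4⁻¹ : ℝ)) ^ 4 = a (m + 1) := by
    simpa using Real.rpow_inv_natCast_pow (hpos m).le (n := 4) (by norm_num)
  rw [mul_div_assoc', div_pow, mul_pow, hquartic]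
  field_simp
end

section
/- Let c > 0 be a fixed real number, and define a sequence (a_n) of positive reals by a_1 = 1 and a_{n+1} = a_n + c·a_n^{3/4} for every n ≥ 1. Then there exists a constant C > 0 such that for every ε ∈ (0,1), the number of indices j ≥ 1 with a_j ≤ (c/(2ε))^4 is at most C/ε. -/
/-- For the sequence a 1 = 1, a (n+1) = a n + c * (a n)^(3/4), there is C > 0 such
that for every ε ∈ (0,1), the number of indices j ≥ 1 with a j ≤ (c/(2ε))^4 is at
most C/ε. -/
theorem stmt_1 (c : ℝ) (hc : 0 < c) (a : ℕ → ℝ) (ha1 : a 1 = 1)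
    (harec : ∀ n : ℕ, 1 ≤ n → a (n + 1) = a n + c * (a n) ^ ((3 : ℝ) / 4)) :
    ∃ C > (0 : ℝ), ∀ ε ∈ Set.Ioo (0 : ℝ) 1,
      {j : ℕ | 1 ≤ j ∧ a j ≤ (c / (2 * ε)) ^ 4}.Finite ∧
      (({j : ℕ | 1 ≤ j ∧ a j ≤ (c / (2 * ε)) ^ 4}.ncard : ℝ)) ≤ C / ε := by
  set δ : ℝ := min 1 (c / 15) with hδdef
  have hδ0 : 0 < δ := lt_min one_pos (by positivity)
  have hδ1 : δ ≤ 1 := min_le_left _ _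
  have hδc : 15 * δ ≤ c := by
    have := min_le_right 1 (c / 15); simp only [hδdef]; nlinarith [this]
  have hpos : ∀ n : ℕ, 1 ≤ n → 0 < a n := by
    intro n hn
    induction n, hn using Nat.le_induction with
    | base => rw [ha1]; exact one_pos
    | succ n hn ih =>
      rw [harec n hn]
      have := Real.rpow_nonneg ih.le ((3:ℝ)/4)
      nlinarith
  have hlow : ∀ n : ℕ, 1 ≤ n → 1 + δ * ((n : ℝ) - 1) ≤ (a n) ^ ((1:ℝ)/4) := by
    intro n hn
    induction n, hn using Nat.le_induction with
    | base => rw [ha1]; simp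
    | succ n hn ih =>
      have hapos := hpos n hn
      set b := (a n) ^ ((1:ℝ)/4) with hb
      have hb0 : 0 < b := Real.rpow_pos_of_pos hapos _
      have hn1 : (1:ℝ) ≤ (n:ℝ) := by exact_mod_cast hn
      have hb1 : 1 ≤ b := by nlinarith
      have hab : a n = b ^ 4 := by
        rw [hb, ← Real.rpow_natCast ((a n) ^ ((1:ℝ)/4)) 4, ← Real.rpow_mul hapos.le]
        norm_num
      have hab3 : (a n) ^ ((3:ℝ)/4) = b ^ 3 := by
        rw [hb, ← Real.rpow_natCast ((a n) ^ ((1:ℝ)/4)) 3, ← Real.rpow_mul hapos.le]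
        norm_num
      have key : (b + δ) ^ 4 ≤ a (n + 1) := by
        rw [harec n hn, hab3, hab]
        have hδb : δ ≤ b := hδ1.trans hb1
        have e1 : 0 ≤ δ * b ^ 2 * (b - δ) :=
          mul_nonneg (mul_nonneg hδ0.le (sq_nonneg b)) (by linarith)
        have e2 : 0 ≤ δ * b * (b - δ) * (b + δ) :=
          mul_nonneg (mul_nonneg (mul_nonneg hδ0.le hb0.le) (by linarith)) (by linarith)
        have e3 : 0 ≤ δ * (b - δ) * (b ^ 2 + b * δ + δ ^ 2) :=
          mul_nonneg (mul_nonneg hδ0.le (by linarith)) (by nlinarith)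
        have e4 : 0 ≤ (c - 15 * δ) * b ^ 3 :=
          mul_nonneg (by linarith) (by positivity)
        nlinarith [e1, e2, e3, e4]
      have h2 : b + δ ≤ (a (n + 1)) ^ ((1:ℝ)/4) := by
        have h4 : (((b + δ) ^ 4 : ℝ)) ^ ((1:ℝ)/4) = b + δ := by
          rw [← Real.rpow_natCast (b + δ) 4, ← Real.rpow_mul (by positivity)]
          norm_num
        calc b + δ = (((b + δ) ^ 4 : ℝ)) ^ ((1:ℝ)/4) := h4.symm
          _ ≤ _ := Real.rpow_le_rpow (by positivity) key (by norm_num)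
      push_cast
      linarith
  refine ⟨1 + c / (2 * δ), by positivity, ?_⟩
  intro ε hε
  obtain ⟨hε0, hε1⟩ := hε
  set S := {j : ℕ | 1 ≤ j ∧ a j ≤ (c / (2 * ε)) ^ 4} with hS
  have hub : ∀ j ∈ S, (j : ℝ) ≤ 1 + c / (2 * ε * δ) := by
    rintro j ⟨hj1, hja⟩
    have hx : (0:ℝ) < c / (2 * ε) := by positivity
    have h1 : (a j) ^ ((1:ℝ)/4) ≤ ((c / (2 * ε)) ^ 4) ^ ((1:ℝ)/4) :=
      Real.rpow_le_rpow (hpos j hj1).le hja (by norm_num)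
    have heq : (((c / (2 * ε)) ^ 4 : ℝ)) ^ ((1:ℝ)/4) = c / (2 * ε) := by
      rw [← Real.rpow_natCast (c / (2 * ε)) 4, ← Real.rpow_mul hx.le]
      norm_num
    have h3 : δ * ((j : ℝ) - 1) ≤ c / (2 * ε) := by
      have := hlow j hj1; rw [heq] at h1; linarith
    have h4 : δ * ((j : ℝ) - 1) * (2 * ε) ≤ c := (le_div_iff₀ (by positivity)).mp h3
    rw [← sub_le_iff_le_add', le_div_iff₀ (by positivity : (0:ℝ) < 2 * ε * δ)]
    nlinarith [h4]
  set M : ℕ := ⌊1 + c / (2 * ε * δ)⌋₊ with hM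
  have hsub : S ⊆ ↑(Finset.Icc 1 M) := by
    intro j hj
    simp only [Finset.coe_Icc, Set.mem_Icc]
    exact ⟨hj.1, Nat.le_floor (hub j hj)⟩
  have hfin : S.Finite := Set.Finite.subset (Finset.Icc 1 M).finite_toSet hsub
  refine ⟨hfin, ?_⟩
  have hcard : S.ncard ≤ M := by
    have h := Set.ncard_le_ncard hsub (Finset.Icc 1 M).finite_toSet
    rw [Set.ncard_coe_finset, Nat.card_Icc] at h
    omega
  have hMle : (M : ℝ) ≤ 1 + c / (2 * ε * δ) := Nat.floor_le (by positivity)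
  have hεinv : 1 ≤ 1 / ε := by rw [le_div_iff₀ hε0]; linarith
  have hCε : (1 + c / (2 * δ)) / ε = 1 / ε + c / (2 * ε * δ) := by
    field_simp
  calc (S.ncard : ℝ) ≤ M := by exact_mod_cast hcard
    _ ≤ 1 + c / (2 * ε * δ) := hMle
    _ ≤ 1 / ε + c / (2 * ε * δ) := by linarith
    _ = (1 + c / (2 * δ)) / ε := hCε.symm
end

section
/- There exists a constant C > 0 such that for all t > 0 and all ε ≥ 0, (√t / π) · ∫_0^∞ ((1 − e^{−ε y²/(2t)})/y)² · e^{−y²} dy ≤ C · √ε · min(1, (ε/t)^{3/2}). -/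
/-!
With `a = ε / (2t)` the integrand is `((1 - e^{-a y²}) / y)² e^{-y²}`, and
`0 ≤ 1 - e^{-x} ≤ min x 1` for `x ≥ 0`. The bound by `x` alone gives
`a² ∫ y² e^{-y²} = a² Γ(3/2) / 2 ≤ a² / 2`, the `(ε/t)^{3/2}` branch. Using it only on
`(0, a^{-1/2}]` and the bound by `1` (i.e. by `y⁻²`) beyond gives `2√a`, the `1` branch.
-/

open Real MeasureTheory Set

lemma one_sub_exp_neg_nonneg {x : ℝ} (hx : 0 ≤ x) : 0 ≤ 1 - exp (-x) := by
  linarith [exp_le_one_iff.2 (neg_nonpos.2 hx)]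

lemma one_sub_exp_neg_le_self (x : ℝ) : 1 - exp (-x) ≤ x := by
  linarith [add_one_le_exp (-x)]

lemma one_sub_exp_neg_le_one (x : ℝ) : 1 - exp (-x) ≤ 1 := by
  linarith [exp_pos (-x)]

lemma rpow_neg_two_eq_one_div_sq {y : ℝ} (hy : 0 ≤ y) : y ^ (-2 : ℝ) = 1 / y ^ 2 := by
  rw [rpow_neg hy, rpow_two, one_div]

lemma integrableOn_Ioi_one_div_sq {c : ℝ} (hc : 0 < c) :
    IntegrableOn (fun y : ℝ => 1 / y ^ 2) (Ioi c) :=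
  (integrableOn_Ioi_rpow_of_lt (by norm_num) hc).congr_fun
    (fun y hy => rpow_neg_two_eq_one_div_sq (hc.trans hy).le) measurableSet_Ioi

lemma integral_Ioi_one_div_sq {c : ℝ} (hc : 0 < c) : ∫ y in Ioi c, 1 / y ^ 2 = 1 / c := by
  rw [← setIntegral_congr_fun measurableSet_Ioi
    (fun y hy => rpow_neg_two_eq_one_div_sq (hc.trans hy).le),
    integral_Ioi_rpow_of_lt (by norm_num) hc]
  norm_num [rpow_neg_one]

lemma integrableOn_sq_mul_exp_neg_sq :
    IntegrableOn (fun y : ℝ => y ^ 2 * exp (-y ^ 2)) (Ioi 0) := by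
  simpa using integrableOn_rpow_mul_exp_neg_mul_sq one_pos (s := 2) (by norm_num)

lemma integral_sq_mul_exp_neg_sq_le_half :
    ∫ y in Ioi (0 : ℝ), y ^ 2 * exp (-y ^ 2) ≤ 1 / 2 := by
  have h := integral_rpow_mul_exp_neg_rpow (p := 2) (q := 2) two_pos (by norm_num)
  simp only [rpow_two] at h
  rw [h]
  norm_num
  linarith [Gamma_three_div_two_lt_one]

noncomputable def incrementIntegrand (a y : ℝ) : ℝ :=
  ((1 - exp (-(a * y ^ 2))) / y) ^ 2 * exp (-y ^ 2)

lemma incrementIntegrand_le_sq_mul {a y : ℝ} (ha : 0 ≤ a) (hy : 0 < y) :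
    incrementIntegrand a y ≤ a ^ 2 * (y ^ 2 * exp (-y ^ 2)) := by
  have hu := one_sub_exp_neg_nonneg (mul_nonneg ha (sq_nonneg y))
  have hdiv : (1 - exp (-(a * y ^ 2))) / y ≤ a * y := by
    rw [div_le_iff₀ hy]; nlinarith [one_sub_exp_neg_le_self (a * y ^ 2)]
  rw [incrementIntegrand, ← mul_assoc, ← mul_pow]
  gcongr

lemma incrementIntegrand_le_one_div_sq {a y : ℝ} (ha : 0 ≤ a) :
    incrementIntegrand a y ≤ 1 / y ^ 2 := by
  have hu := one_sub_exp_neg_nonneg (mul_nonneg ha (sq_nonneg y))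
  have h1 := one_sub_exp_neg_le_one (a * y ^ 2)
  rw [incrementIntegrand, div_pow]
  calc (1 - exp (-(a * y ^ 2))) ^ 2 / y ^ 2 * exp (-y ^ 2) ≤ 1 / y ^ 2 * 1 := by
        gcongr
        · exact pow_le_one₀ hu h1
        · exact exp_le_one_iff.2 (neg_nonpos.2 (sq_nonneg y))
    _ = 1 / y ^ 2 := mul_one _

lemma integrableOn_incrementIntegrand {a : ℝ} (ha : 0 ≤ a) :
    IntegrableOn (incrementIntegrand a) (Ioi 0) := by
  refine (integrableOn_sq_mul_exp_neg_sq.const_mul (a ^ 2)).mono' ?_ ?_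
  · have : Measurable (incrementIntegrand a) := by unfold incrementIntegrand; fun_prop
    exact this.aestronglyMeasurable
  · filter_upwards [ae_restrict_mem measurableSet_Ioi] with y hy
    rw [Real.norm_of_nonneg (by unfold incrementIntegrand; positivity)]
    exact incrementIntegrand_le_sq_mul ha hy

noncomputable def incrementIntegral (a : ℝ) : ℝ :=
  ∫ y in Ioi (0 : ℝ), incrementIntegrand a y

lemma incrementIntegral_le_sq_div_two {a : ℝ} (ha : 0 ≤ a) :
    incrementIntegral a ≤ a ^ 2 / 2 := by
  calc incrementIntegral a ≤ ∫ y in Ioi (0 : ℝ), a ^ 2 * (y ^ 2 * exp (-y ^ 2)) :=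
        setIntegral_mono_on (integrableOn_incrementIntegrand ha)
          (integrableOn_sq_mul_exp_neg_sq.const_mul _) measurableSet_Ioi
          (fun y hy => incrementIntegrand_le_sq_mul ha hy)
    _ ≤ a ^ 2 * (1 / 2) := by
        rw [integral_const_mul]
        gcongr
        exact integral_sq_mul_exp_neg_sq_le_half
    _ = a ^ 2 / 2 := by ring

lemma incrementIntegral_le_two_mul_sqrt {a : ℝ} (ha : 0 ≤ a) :
    incrementIntegral a ≤ 2 * √a := by
  rcases ha.eq_or_lt with rfl | ha
  · simpa using incrementIntegral_le_sq_div_two le_rfl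
  set c := 1 / √a with hc_def
  have hc : 0 < c := by positivity
  have hac : a * c = √a := by rw [hc_def, mul_one_div, div_sqrt]
  have hint := integrableOn_incrementIntegrand ha.le
  have hnear : ∫ y in Ioc 0 c, incrementIntegrand a y ≤ √a := by
    calc ∫ y in Ioc 0 c, incrementIntegrand a y ≤ ∫ _ in Ioc 0 c, a :=
          setIntegral_mono_on (hint.mono_set Ioc_subset_Ioi_self)
            (integrableOn_const measure_Ioc_lt_top.ne) measurableSet_Ioc fun y hy => ?_
      _ = √a := by simp [hc.le, hac, mul_comm]
    calc incrementIntegrand a y ≤ a ^ 2 * (y ^ 2 * exp (-y ^ 2)) :=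
          incrementIntegrand_le_sq_mul ha.le hy.1
      _ ≤ a ^ 2 * (c ^ 2 * 1) := by
          gcongr
          · exact hy.1.le
          · exact hy.2
          · exact exp_le_one_iff.2 (neg_nonpos.2 (sq_nonneg y))
      _ = a := by rw [mul_one, ← mul_pow, hac, sq_sqrt ha.le]
  have hfar : ∫ y in Ioi c, incrementIntegrand a y ≤ √a := by
    calc ∫ y in Ioi c, incrementIntegrand a y ≤ ∫ y in Ioi c, 1 / y ^ 2 :=
          setIntegral_mono_on (hint.mono_set (Ioi_subset_Ioi hc.le))
            (integrableOn_Ioi_one_div_sq hc) measurableSet_Ioi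
            fun y _ => incrementIntegrand_le_one_div_sq ha.le
      _ = √a := by rw [integral_Ioi_one_div_sq hc, hc_def, one_div_one_div]
  rw [incrementIntegral, ← Ioc_union_Ioi_eq_Ioi hc.le,
    setIntegral_union (Ioc_disjoint_Ioi le_rfl) measurableSet_Ioi
      (hint.mono_set Ioc_subset_Ioi_self) (hint.mono_set (Ioi_subset_Ioi hc.le))]
  linarith

lemma sqrt_mul_rpow_three_halves {t ε : ℝ} (ht : 0 < t) (hε : 0 ≤ ε) :
    √ε * (ε / t) ^ (3 / 2 : ℝ) = ε ^ 2 / (t * √t) := by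
  rw [show (3 / 2 : ℝ) = 1 + 1 / 2 by norm_num, rpow_add' (by positivity) (by norm_num), rpow_one,
    ← sqrt_eq_rpow, sqrt_div' _ ht.le]
  field_simp
  rw [sq_sqrt hε]; ring

section Rescaled

variable {t ε : ℝ} (ht : 0 < t) (hε : 0 ≤ ε)
include ht hε

lemma sqrt_div_pi_mul_incrementIntegral_le_sqrt :
    √t / π * incrementIntegral (ε / (2 * t)) ≤ √ε := by
  have h : √t * √(ε / (2 * t)) = √(ε / 2) := by
    rw [← sqrt_mul ht.le]; congr 1; field_simp
  calc √t / π * incrementIntegral (ε / (2 * t)) ≤ √t / π * (2 * √(ε / (2 * t))) := by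
        gcongr; exact incrementIntegral_le_two_mul_sqrt (by positivity)
    _ = 2 / π * √(ε / 2) := by rw [← h]; ring
    _ ≤ 1 * √ε := by
        gcongr
        · rw [div_le_one pi_pos]; linarith [pi_gt_three]
        · linarith
    _ = √ε := one_mul _

lemma sqrt_div_pi_mul_incrementIntegral_le_sqrt_mul_rpow :
    √t / π * incrementIntegral (ε / (2 * t)) ≤ √ε * (ε / t) ^ (3 / 2 : ℝ) := by
  rw [sqrt_mul_rpow_three_halves ht hε]
  have hs : 0 < √t := sqrt_pos.2 ht
  calc √t / π * incrementIntegral (ε / (2 * t)) ≤ √t / π * ((ε / (2 * t)) ^ 2 / 2) := by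
        gcongr; exact incrementIntegral_le_sq_div_two (by positivity)
    _ = ε ^ 2 / (t * √t) / (8 * π) := by
        field_simp
        rw [sq_sqrt ht.le]; ring
    _ ≤ ε ^ 2 / (t * √t) := div_le_self (by positivity) (by linarith [pi_gt_three])

end Rescaled

/-- The squared canonical distance of the auxiliary Gaussian process satisfies
(√t/π) ∫_0^∞ ((1 − e^{−ε y²/(2t)})/y)² e^{−y²} dy ≤ C √ε min(1, (ε/t)^{3/2}). -/
theorem stmt_2 :
    ∃ C > (0 : ℝ), ∀ t > (0 : ℝ), ∀ ε ≥ (0 : ℝ),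
      (Real.sqrt t / π) *
          ∫ y in Set.Ioi (0 : ℝ),
            ((1 - Real.exp (-ε * y ^ 2 / (2 * t))) / y) ^ 2 * Real.exp (-y ^ 2)
        ≤ C * Real.sqrt ε * min 1 ((ε / t) ^ ((3 : ℝ) / 2)) := by
  refine ⟨1, one_pos, fun t ht ε hε => ?_⟩
  have hJ : ∫ y in Ioi (0 : ℝ), ((1 - exp (-ε * y ^ 2 / (2 * t))) / y) ^ 2 * exp (-y ^ 2) =
      incrementIntegral (ε / (2 * t)) := by
    simp only [incrementIntegral, incrementIntegrand]
    congr! 7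
    ring
  rw [hJ, one_mul, mul_min_of_nonneg _ _ (sqrt_nonneg ε), mul_one]
  exact le_min (sqrt_div_pi_mul_incrementIntegral_le_sqrt ht hε)
    (sqrt_div_pi_mul_incrementIntegral_le_sqrt_mul_rpow ht hε)
end

section
/- For every t > 0, ∫_0^t (4πs)^{−1} · ( ∫_{−1}^{1} ( Σ_{n=1}^∞ exp(−(y+2n)²/(4s)) )² dy ) ds ≤ 2t. -/
/-!
For `y ≥ -1` the image term `exp (-(y + 2n)² / 4s)` is at most `exp (-n² / 4s)`, and by the
integral test `∑_{n ≥ 1} exp (-n² / 4s)` is at most the half-line Gaussian integral `√(πs)`.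
So the `y`-integral over `[-1, 1]` is at most `2πs`, the `s`-integrand at most `1/2`, and the
whole integral at most `t / 2`.
-/

open Real MeasureTheory intervalIntegral

open scoped Interval

lemma antitoneOn_exp_neg_mul_sq {u : ℝ} (hu : 0 ≤ u) :
    AntitoneOn (fun x : ℝ => exp (-u * x ^ 2)) (Set.Ici 0) := by
  intro a ha b _ hab
  simp only [exp_le_exp, neg_mul, neg_le_neg_iff]
  have ha : (0 : ℝ) ≤ a := ha
  gcongr

lemma summable_exp_neg_mul_succ_sq {u : ℝ} (hu : 0 < u) :
    Summable fun n : ℕ => exp (-u * ((n : ℝ) + 1) ^ 2) := by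
  have h := (antitoneOn_exp_neg_mul_sq hu.le).summable_of_integrableOn_Ioi_zero
    (integrable_exp_neg_mul_sq hu).integrableOn fun _ _ => (exp_pos _).le
  exact_mod_cast (summable_nat_add_iff 1).2 h

lemma tsum_exp_neg_mul_succ_sq_le {u : ℝ} (hu : 0 < u) :
    ∑' n : ℕ, exp (-u * ((n : ℝ) + 1) ^ 2) ≤ √(π / u) / 2 := by
  rw [← integral_gaussian_Ioi]
  exact_mod_cast (antitoneOn_exp_neg_mul_sq hu.le).tsum_add_one_le_integral
    (integrable_exp_neg_mul_sq hu).integrableOn fun _ _ => (exp_pos _).le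

noncomputable def imageSum (s y : ℝ) : ℝ :=
  ∑' n : ℕ, exp (-(y + 2 * ((n : ℝ) + 1)) ^ 2 / (4 * s))

lemma imageSum_nonneg (s y : ℝ) : 0 ≤ imageSum s y :=
  tsum_nonneg fun _ => (exp_pos _).le

lemma imageSum_le {s y : ℝ} (hs : 0 < s) (hy : -1 ≤ y) : imageSum s y ≤ √(π * s) := by
  have hu : 0 < (4 * s)⁻¹ := by positivity
  have hterm (n : ℕ) : exp (-(y + 2 * ((n : ℝ) + 1)) ^ 2 / (4 * s))
      ≤ exp (-(4 * s)⁻¹ * ((n : ℝ) + 1) ^ 2) := by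
    rw [exp_le_exp, neg_div, neg_mul, neg_le_neg_iff, div_eq_inv_mul]
    have hn : (0 : ℝ) ≤ n := n.cast_nonneg
    have hsq : ((n : ℝ) + 1) ^ 2 ≤ (y + 2 * ((n : ℝ) + 1)) ^ 2 := by nlinarith
    gcongr
  have hsum := summable_exp_neg_mul_succ_sq hu
  calc imageSum s y ≤ ∑' n : ℕ, exp (-(4 * s)⁻¹ * ((n : ℝ) + 1) ^ 2) :=
        (hsum.of_nonneg_of_le (fun _ => (exp_pos _).le) hterm).tsum_le_tsum hterm hsum
    _ ≤ √(π / (4 * s)⁻¹) / 2 := tsum_exp_neg_mul_succ_sq_le hu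
    _ = √(π * s) := by
        rw [div_inv_eq_mul, show π * (4 * s) = 2 ^ 2 * (π * s) by ring,
          sqrt_mul (by positivity), sqrt_sq zero_le_two]
        ring

lemma integral_imageSum_sq_le {s : ℝ} (hs : 0 < s) :
    ∫ y in (-1 : ℝ)..1, imageSum s y ^ 2 ≤ 2 * (π * s) := by
  have hbound : ∀ y ∈ Ι (-1 : ℝ) 1, ‖imageSum s y ^ 2‖ ≤ π * s := by
    intro y hy
    rw [Set.uIoc_of_le (by norm_num)] at hy
    rw [norm_pow, Real.norm_of_nonneg (imageSum_nonneg s y),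
      ← sq_sqrt (by positivity : 0 ≤ π * s)]
    exact pow_le_pow_left₀ (imageSum_nonneg s y) (imageSum_le hs hy.1.le) 2
  calc _ ≤ ‖∫ y in (-1 : ℝ)..1, imageSum s y ^ 2‖ := le_norm_self _
    _ ≤ π * s * |1 - (-1)| := norm_integral_le_of_norm_le_const hbound
    _ = 2 * (π * s) := by norm_num; ring

lemma norm_inv_mul_integral_imageSum_sq_le {s : ℝ} (hs : 0 < s) :
    ‖(4 * π * s)⁻¹ * ∫ y in (-1 : ℝ)..1, imageSum s y ^ 2‖ ≤ 1 / 2 := by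
  have hI : 0 ≤ ∫ y in (-1 : ℝ)..1, imageSum s y ^ 2 :=
    integral_nonneg (by norm_num) fun _ _ => sq_nonneg _
  rw [Real.norm_of_nonneg (by positivity)]
  calc _ ≤ (4 * π * s)⁻¹ * (2 * (π * s)) := by gcongr; exact integral_imageSum_sq_le hs
    _ = 1 / 2 := by field_simp; ring

/-- The wrap-around contribution of the torus heat kernel:
∫_0^t (4πs)^{−1} ∫_{−1}^{1} (Σ_{n=1}^∞ exp(−(y+2n)²/(4s)))² dy ds ≤ 2t. -/
theorem stmt_4 (t : ℝ) (ht : 0 < t) :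
    ∫ s in (0 : ℝ)..t,
        (4 * π * s)⁻¹ *
          ∫ y in (-1 : ℝ)..1,
            (∑' n : ℕ, Real.exp (-(y + 2 * ((n : ℝ) + 1)) ^ 2 / (4 * s))) ^ 2
      ≤ 2 * t := by
  calc _ ≤ ‖∫ s in (0 : ℝ)..t, (4 * π * s)⁻¹ * ∫ y in (-1 : ℝ)..1, imageSum s y ^ 2‖ :=
        le_norm_self _
    _ ≤ 1 / 2 * |t - 0| := norm_integral_le_of_norm_le_const fun s hs =>
        norm_inv_mul_integral_imageSum_sq_le (Set.uIoc_of_le ht.le ▸ hs).1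
    _ ≤ 2 * t := by rw [sub_zero, abs_of_pos ht]; linarith
end

section
/- There exists a constant M > 0 such that for every r > 0 and every a ∈ [−1, 1], Σ_{n ∈ ℤ, n ≠ 0} exp(−(a+2n)²/(4r)) / √(4πr) ≤ M. -/
/-!
Split the lattice sum into the terms with `n ≥ 1` and with `n ≤ -1`; after `a ↦ -a` both are
sums `∑_{n ≥ 0} g (b + 2 (n + 1))` with `b ≥ -1` of the Gaussian `g x = exp (-x² / (4r))`.
Each term is at most the average of `g` over `[b + 2n, b + 2(n + 1)]`, since `g` decreases in
`|x|`, so each half-sum is at most `(∫ g) / 2 = √(4πr) / 2`. Hence `M = 1` works.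
-/

open Real MeasureTheory Finset

theorem tsum_int_ne_zero_eq {M : Type*} [AddCommMonoid M] [TopologicalSpace M] [ContinuousAdd M]
    [T2Space M] {f : ℤ → M} (hf₁ : Summable fun n : ℕ ↦ f (n + 1))
    (hf₂ : Summable fun n : ℕ ↦ f (-(n + 1))) :
    ∑' n : {n : ℤ // n ≠ 0}, f n = ∑' n : ℕ, f (n + 1) + ∑' n : ℕ, f (-(n + 1)) := by
  have hpos (n : ℕ) : ((n : ℤ) + 1) ∈ {n : ℤ | n ≠ 0} := by simp only [Set.mem_ofPred_eq]; omega
  have hneg (n : ℕ) : (-((n : ℤ) + 1)) ∈ {n : ℤ | n ≠ 0} := by simp only [Set.mem_ofPred_eq]; omega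
  refine (tsum_subtype {n : ℤ | n ≠ 0} f).trans ?_
  rw [tsum_of_add_one_of_neg_add_one]
  · have hzero : {n : ℤ | n ≠ 0}.indicator f 0 = 0 := Set.indicator_of_notMem (by simp) f
    simp only [Set.indicator_of_mem (hpos _), Set.indicator_of_mem (hneg _), hzero, add_zero]
  · simpa only [Set.indicator_of_mem (hpos _)] using hf₁
  · simpa only [Set.indicator_of_mem (hneg _)] using hf₂

section RadiallyAntitone

variable {f : ℝ → ℝ} {h a : ℝ}

theorem sum_range_le_integral_div (hf : Integrable f) (hf₀ : 0 ≤ f)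
    (hmono : ∀ x y, |x| ≤ |y| → f y ≤ f x) (hh : 0 < h) (ha : -h / 2 ≤ a) (N : ℕ) :
    ∑ n ∈ range N, f (a + h * (n + 1)) ≤ (∫ x, f x) / h := by
  have hcell (n : ℕ) : h * f (a + h * (n + 1)) ≤ ∫ x in (a + h * n)..(a + h * (n + 1)), f x := by
    have hn : (0 : ℝ) ≤ n := n.cast_nonneg
    calc h * f (a + h * (n + 1))
        = ∫ _ in (a + h * n)..(a + h * (n + 1)), f (a + h * (n + 1)) := by
          rw [intervalIntegral.integral_const, smul_eq_mul]; ring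
      _ ≤ ∫ x in (a + h * n)..(a + h * (n + 1)), f x := by
          refine intervalIntegral.integral_mono_on (by nlinarith) intervalIntegrable_const
            hf.intervalIntegrable fun x hx ↦ hmono _ _ ?_
          rw [abs_of_nonneg (a := a + h * (n + 1)) (by nlinarith)]
          exact abs_le.2 ⟨by nlinarith [hx.1], hx.2⟩
  rw [le_div_iff₀' hh, mul_sum]
  calc ∑ n ∈ range N, h * f (a + h * (n + 1))
      ≤ ∑ n ∈ range N, ∫ x in (a + h * n)..(a + h * (n + 1)), f x := sum_le_sum fun n _ ↦ hcell n
    _ = ∫ x in a..(a + h * N), f x := by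
        have := intervalIntegral.sum_integral_adjacent_intervals (a := fun k : ℕ ↦ a + h * k)
          (μ := volume) (n := N) fun k _ ↦ hf.intervalIntegrable
        push_cast at this
        simpa using this
    _ ≤ ∫ x, f x := by
        rw [intervalIntegral.integral_of_le (by nlinarith [N.cast_nonneg (α := ℝ)])]
        exact setIntegral_le_integral hf (.of_forall hf₀)

end RadiallyAntitone

section Gaussian

variable {r : ℝ}

theorem integral_exp_neg_sq_div : ∫ x : ℝ, exp (-x ^ 2 / (4 * r)) = √(4 * π * r) := by
  have := integral_gaussian (1 / (4 * r))
  rw [div_div_eq_mul_div, div_one] at this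
  simpa [neg_div, div_eq_inv_mul, mul_comm, mul_left_comm, mul_assoc] using this

theorem exp_neg_sq_div_le_of_abs_le (hr : 0 ≤ r) {x y : ℝ} (hxy : |x| ≤ |y|) :
    exp (-y ^ 2 / (4 * r)) ≤ exp (-x ^ 2 / (4 * r)) :=
  exp_le_exp.2 (div_le_div_of_nonneg_right (neg_le_neg (sq_le_sq.2 hxy)) (by positivity))

theorem tsum_exp_neg_sq_div_int_ne_zero_le (hr : 0 < r) {a : ℝ} (ha : a ∈ Set.Icc (-1 : ℝ) 1) :
    ∑' n : {n : ℤ // n ≠ 0}, exp (-(a + 2 * (n : ℝ)) ^ 2 / (4 * r)) ≤ √(4 * π * r) := by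
  set g : ℝ → ℝ := fun x ↦ exp (-x ^ 2 / (4 * r)) with hg
  have hg₀ : 0 ≤ g := fun x ↦ (exp_pos _).le
  have hg_int : Integrable g := by
    simpa [hg, neg_div, div_eq_inv_mul, mul_comm] using
      integrable_exp_neg_mul_sq (b := 1 / (4 * r)) (by positivity)
  have half (b : ℝ) (hb : -1 ≤ b) :
      Summable (fun n : ℕ ↦ g (b + 2 * (n + 1))) ∧
        ∑' n : ℕ, g (b + 2 * (n + 1)) ≤ √(4 * π * r) / 2 := by
    have hsum := sum_range_le_integral_div hg_int hg₀
      (fun _ _ ↦ exp_neg_sq_div_le_of_abs_le hr.le) two_pos (by linarith) (a := b)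
    rw [integral_exp_neg_sq_div] at hsum
    exact ⟨summable_of_sum_range_le (fun _ ↦ hg₀ _) hsum,
      Real.tsum_le_of_sum_range_le (fun _ ↦ hg₀ _) hsum⟩
  have hpos : (fun n : ℕ ↦ g (a + 2 * ((n + 1 : ℤ) : ℝ))) =
      fun n : ℕ ↦ g (a + 2 * ((n : ℝ) + 1)) := by
    push_cast; rfl
  have hneg : (fun n : ℕ ↦ g (a + 2 * ((-(n + 1) : ℤ) : ℝ))) =
      fun n : ℕ ↦ g (-a + 2 * ((n : ℝ) + 1)) := by
    ext n; simp only [hg]; push_cast; ring_nf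
  obtain ⟨hs₁, ht₁⟩ := half a ha.1
  obtain ⟨hs₂, ht₂⟩ := half (-a) (by linarith [ha.2])
  calc _ = ∑' n : ℕ, g (a + 2 * ((n : ℝ) + 1)) + ∑' n : ℕ, g (-a + 2 * ((n : ℝ) + 1)) := by
        rw [← hpos, ← hneg]
        exact tsum_int_ne_zero_eq (f := fun n : ℤ ↦ g (a + 2 * (n : ℝ)))
          (by rw [hpos]; exact hs₁) (by rw [hneg]; exact hs₂)
    _ ≤ √(4 * π * r) := by linarith

end Gaussian

/-- The difference between the torus heat kernel and the heat kernel on ℝ is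
uniformly bounded: there is M > 0 such that for all r > 0 and a ∈ [−1,1],
Σ_{n∈ℤ, n≠0} exp(−(a+2n)²/(4r))/√(4πr) ≤ M. -/
theorem stmt_9 :
    ∃ M > (0 : ℝ), ∀ r > (0 : ℝ), ∀ a ∈ Set.Icc (-1 : ℝ) 1,
      (∑' n : {n : ℤ // n ≠ 0},
          Real.exp (-(a + 2 * ((n : ℤ) : ℝ)) ^ 2 / (4 * r)) / Real.sqrt (4 * π * r))
        ≤ M := by
  refine ⟨1, one_pos, fun r hr a ha ↦ ?_⟩
  rw [tsum_div_const, div_le_one (sqrt_pos.2 (by positivity))]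
  exact tsum_exp_neg_sq_div_int_ne_zero_le hr ha
end
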